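/- For every ε ∈ (0, 1/2], every R ≥ 0, every θ ∈ ℝ with |sin(θ/2)| ≤ (ε/4)·e^{−R}, and every ξ ∈ 𝔻 with |ξ| ≤ (e^R−1)/(e^R+1), the Poincaré distance satisfies d_P(ξ, e^{iθ}ξ) ≤ 2ε. -/

import Mathlib

/-!
Write `a = ‖ξ‖`. The rotation moves `ξ` by `2 |sin (θ/2)| a`, while the denominator of the
pseudo-hyperbolic distance is at least `1 - a²`. On the disk of hyperbolic radius `R` one has
`4a ≤ e^R (1 - a²)`, so the pseudo-hyperbolic distance is at most `ε/8 ≤ 1/2`, and there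
`artanh t ≤ 2t`.
-/

/-- The inverse hyperbolic tangent. -/
noncomputable def artanh (x : ℝ) : ℝ := Real.log ((1 + x) / (1 - x)) / 2

/-- The Poincaré distance on the unit disc. -/
noncomputable def dP (z w : ℂ) : ℝ :=
  2 * artanh (‖z - w‖ / ‖1 - (starRingEnd ℂ) w * z‖)

open Complex ComplexConjugate

lemma artanh_le_two_mul {t : ℝ} (h₀ : 0 ≤ t) (h₁ : t ≤ 1 / 2) : artanh t ≤ 2 * t := by
  have hquot : (1 + t) / (1 - t) ≤ Real.exp (4 * t) := calc
    (1 + t) / (1 - t) ≤ 4 * t + 1 := by rw [div_le_iff₀ (by linarith)]; nlinarith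
    _ ≤ Real.exp (4 * t) := Real.add_one_le_exp _
  have hlog := Real.log_le_log (div_pos (by linarith) (by linarith)) hquot
  rw [Real.log_exp] at hlog
  unfold artanh
  linarith

lemma dP_le_four_mul {z w : ℂ} (h : ‖z - w‖ / ‖1 - conj w * z‖ ≤ 1 / 2) :
    dP z w ≤ 4 * (‖z - w‖ / ‖1 - conj w * z‖) := by
  have := artanh_le_two_mul (by positivity) h
  unfold dP
  linarith

lemma one_sub_norm_mul_norm_le_norm_one_sub_conj_mul (z w : ℂ) :
    1 - ‖w‖ * ‖z‖ ≤ ‖1 - conj w * z‖ := by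
  simpa [norm_mul] using norm_sub_norm_le (1 : ℂ) (conj w * z)

lemma norm_sub_exp_ofReal_mul_I_mul (θ : ℝ) (ξ : ℂ) :
    ‖ξ - exp (θ * I) * ξ‖ = 2 * |Real.sin (θ / 2)| * ‖ξ‖ := by
  rw [show ξ - exp (θ * I) * ξ = -((exp (θ * I) - 1) * ξ) by ring, norm_neg, norm_mul,
    mul_comm (θ : ℂ) I, norm_exp_I_mul_ofReal_sub_one, Real.norm_eq_abs, abs_mul, abs_two]

lemma norm_sub_rotation_div_le (θ : ℝ) {ξ : ℂ} (hξ : ‖ξ‖ < 1) :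
    ‖ξ - exp (θ * I) * ξ‖ / ‖1 - conj (exp (θ * I) * ξ) * ξ‖ ≤
      2 * |Real.sin (θ / 2)| * ‖ξ‖ / (1 - ‖ξ‖ ^ 2) := by
  have hden := one_sub_norm_mul_norm_le_norm_one_sub_conj_mul ξ (exp (θ * I) * ξ)
  rw [norm_mul, norm_exp_ofReal_mul_I, one_mul] at hden
  rw [norm_sub_exp_ofReal_mul_I_mul]
  exact div_le_div_of_nonneg_left (by positivity) (by nlinarith [norm_nonneg ξ])
    (by linarith)

/-- The hypothesis says `e^R ≥ (1 + a) / (1 - a)`, so `e^R (1 - a²) ≥ (1 + a)² ≥ 4a`. -/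
lemma four_mul_le_exp_mul_one_sub_sq {R a : ℝ} (ha₀ : 0 ≤ a)
    (ha : a ≤ (Real.exp R - 1) / (Real.exp R + 1)) : 4 * a ≤ Real.exp R * (1 - a ^ 2) := by
  have hE := Real.exp_pos R
  rw [le_div_iff₀ (by linarith)] at ha
  nlinarith [mul_le_mul_of_nonneg_right ha (by linarith : 0 ≤ 1 + a), sq_nonneg (1 - a)]

theorem stmt_12_general (ε : ℝ) (hε : ε ∈ Set.Ioc (0 : ℝ) (1 / 2)) (R : ℝ)
    (θ : ℝ) (hθ : |Real.sin (θ / 2)| ≤ (ε / 4) * Real.exp (-R))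
    (ξ : ℂ) (hξ : ‖ξ‖ ≤ (Real.exp R - 1) / (Real.exp R + 1)) :
    dP ξ (Complex.exp (θ * Complex.I) * ξ) ≤ 2 * ε := by
  obtain ⟨hε₀, hε₁⟩ := hε
  have hE := Real.exp_pos R
  have hξ₁ : ‖ξ‖ < 1 := hξ.trans_lt ((div_lt_one (by linarith)).2 (by linarith))
  have hkey := four_mul_le_exp_mul_one_sub_sq (norm_nonneg ξ) hξ
  rw [Real.exp_neg] at hθ
  have hquot : ‖ξ - exp (θ * I) * ξ‖ / ‖1 - conj (exp (θ * I) * ξ) * ξ‖ ≤ ε / 8 := by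
    refine (norm_sub_rotation_div_le θ hξ₁).trans ?_
    rw [div_le_iff₀ (by nlinarith [norm_nonneg ξ])]
    calc 2 * |Real.sin (θ / 2)| * ‖ξ‖ ≤ 2 * (ε / 4 * (Real.exp R)⁻¹) * ‖ξ‖ := by gcongr
      _ = ε / 8 * (Real.exp R)⁻¹ * (4 * ‖ξ‖) := by ring
      _ ≤ ε / 8 * (Real.exp R)⁻¹ * (Real.exp R * (1 - ‖ξ‖ ^ 2)) := by gcongr
      _ = ε / 8 * (1 - ‖ξ‖ ^ 2) := by field_simp
  have := dP_le_four_mul (hquot.trans (by linarith))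
  linarith

/-- if `|sin(θ/2)| ≤ (ε/4) e^{-R}` then `d_P(ξ, e^{iθ}ξ) ≤ 2ε` on
the closed hyperbolic disk of radius `R`. -/
theorem stmt_12 (ε : ℝ) (hε : ε ∈ Set.Ioc (0 : ℝ) (1 / 2)) (R : ℝ) (hR : 0 ≤ R)
    (θ : ℝ) (hθ : |Real.sin (θ / 2)| ≤ (ε / 4) * Real.exp (-R))
    (ξ : ℂ) (hξ : ‖ξ‖ ≤ (Real.exp R - 1) / (Real.exp R + 1)) :
    dP ξ (Complex.exp (θ * Complex.I) * ξ) ≤ 2 * ε :=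
  stmt_12_general ε hε R θ hθ ξ hξ
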